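/- Let H be an exactly connected simple hypergraph whose unified matrix U(H) has ℓ distinct eigenvalues. Then the exact diameter of H satisfies ED(H) ≤ ℓ − 1. -/

import Mathlib

variable {V : Type} [Fintype V] [DecidableEq V]

/-- A finite hypergraph: a finite vertex set and a multiset of nonempty edges. -/
structure Hypergraph' (V : Type) [Fintype V] [DecidableEq V] where
  verts : Finset V
  edges : Multiset (Finset V)
  edges_sub : ∀ e ∈ edges, e ⊆ verts
  edges_nonempty : ∀ e ∈ edges, e.Nonempty

open Classical in
/-- `IH H` is `I(H)`: all parts of 2-partitions of edges plus all singletons of `V(H)`. -/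
noncomputable def IH (H : Hypergraph' V) : Finset (Finset V) :=
  Finset.univ.filter fun S =>
    (S.Nonempty ∧ ∃ e ∈ H.edges, S ⊂ e) ∨ ∃ v ∈ H.verts, S = {v}

/-- The unified matrix of a hypergraph, indexed by `I(H)`. -/
noncomputable def U (H : Hypergraph' V) : Matrix ↥(IH H) ↥(IH H) ℝ := fun S T =>
  if (S : Finset V) = (T : Finset V) then
    (if (S : Finset V).card = 1 then (H.edges.count (S : Finset V) : ℝ) else 0)
  else if Disjoint (S : Finset V) (T : Finset V) then
    (H.edges.count ((S : Finset V) ∪ (T : Finset V)) : ℝ)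
  else 0

/-- Degree of a vertex: number of edges (with multiplicity) containing it. -/
def deg (H : Hypergraph' V) (v : V) : ℕ := (H.edges.filter (fun e => v ∈ e)).card

/-- Unified degree of a set `S`: number of edges (with multiplicity) containing `S`. -/
def udeg (H : Hypergraph' V) (S : Finset V) : ℕ := (H.edges.filter (fun e => S ⊆ e)).card

/-- `incl H` = ∂(H): number of edges of cardinality ≥ 2 properly contained in another edge. -/
noncomputable def incl (H : Hypergraph' V) : ℕ :=
  Multiset.card (H.edges.filter (fun e => 2 ≤ e.card ∧ ∃ e' ∈ H.edges, e ⊂ e'))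

/-- A hypergraph is simple if it has no multiple edges and no loops. -/
def Simple (H : Hypergraph' V) : Prop :=
  H.edges.Nodup ∧ ∀ e ∈ H.edges, 2 ≤ e.card

/-- `tau S` = τ(S): the set of unordered 2-partitions of `S`. -/
def tau (S : Finset V) : Finset (Finset (Finset V)) :=
  (S.powerset.filter fun A => A.Nonempty ∧ A ⊂ S).image fun A => {A, S \ A}


/-- Two parts are adjacent when they form a 2-partition of an edge of `H`. -/
def Adj (H : Hypergraph' V) (S T : Finset V) : Prop :=
  S.Nonempty ∧ T.Nonempty ∧ Disjoint S T ∧ S ∪ T ∈ H.edges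

/-- There is an exact path of length `n` joining some `S ∋ u` and `S' ∋ v`. -/
def ExactPathBetween (H : Hypergraph' V) (u v : V) (n : ℕ) : Prop :=
  ∃ l : List (Finset V), l.length = n + 1 ∧ l.Nodup ∧ (∀ S ∈ l, S ∈ IH H) ∧
    l.Chain' (Adj H) ∧ (∃ S, l.head? = some S ∧ u ∈ S) ∧
    (∃ S, l.getLast? = some S ∧ v ∈ S)


/-! For a simple hypergraph, `U(H)` is the adjacency matrix `A` of the graph on `I(H)` whose edges
are the 2-partitions of edges of `H`, and exact paths are exactly the paths of this graph. So the
claim is the classical bound "diameter ≤ ℓ - 1" for graphs: `A ^ d` is a real polynomial of degree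
`< ℓ` in `A` (interpolate `x ^ d` at the eigenvalues), so if two parts were at distance `d ≥ ℓ`,
then `(A ^ d) S T > 0` would force `(A ^ k) S T ≠ 0`, i.e. a shorter walk, for some `k < ℓ`. -/

open Polynomial

namespace Matrix.IsHermitian

variable {n 𝕜 : Type*} [Fintype n] [DecidableEq n] [RCLike 𝕜] {M : Matrix n n 𝕜}

theorem aeval_eq_of_eqOn_eigenvalues (hM : M.IsHermitian) {p q : ℝ[X]}
    (h : ∀ i, p.eval (hM.eigenvalues i) = q.eval (hM.eigenvalues i)) : aeval M p = aeval M q := by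
  rw [← cfc_polynomial p M hM.isSelfAdjoint, ← cfc_polynomial q M hM.isSelfAdjoint]
  refine cfc_congr ?_
  rw [hM.spectrum_real_eq_range_eigenvalues]
  rintro _ ⟨i, rfl⟩
  exact h i

theorem exists_pow_eq_sum_pow_lt_card_eigenvalues (hM : M.IsHermitian) (d : ℕ) :
    ∃ c : ℕ → ℝ,
      M ^ d = ∑ k ∈ Finset.range (Finset.univ.image hM.eigenvalues).card, c k • M ^ k := by
  set s := Finset.univ.image hM.eigenvalues
  set q := Lagrange.interpolate s id (· ^ d)
  have hq : ∀ i, q.eval (hM.eigenvalues i) = (X ^ d : ℝ[X]).eval (hM.eigenvalues i) := fun i => by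
    rw [eval_pow, eval_X]
    exact Lagrange.eval_interpolate_at_node _ Function.injective_id.injOn
      (Finset.mem_image_of_mem _ (Finset.mem_univ i))
  refine ⟨q.coeff, ?_⟩
  rw [← aeval_X_pow (R := ℝ), ← hM.aeval_eq_of_eqOn_eigenvalues hq]
  rcases eq_or_ne q 0 with hq0 | hq0
  · simp [hq0]
  · exact aeval_eq_sum_range' ((natDegree_lt_iff_degree_lt hq0).2
      (Lagrange.degree_interpolate_lt _ Function.injective_id.injOn)) M

end Matrix.IsHermitian

namespace SimpleGraph

variable {W 𝕜 : Type*} [Fintype W] [DecidableEq W] {G : SimpleGraph W} [DecidableRel G.Adj]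

theorem adjMatrix_pow_apply_ne_zero_iff [Semiring 𝕜] [CharZero 𝕜] (k : ℕ) (S T : W) :
    (G.adjMatrix 𝕜 ^ k) S T ≠ 0 ↔ ∃ p : G.Walk S T, p.length = k := by
  rw [adjMatrix_pow_apply_eq_card_walk, Nat.cast_ne_zero, ← Nat.pos_iff_ne_zero,
    Fintype.card_pos_iff, Set.nonempty_coe_sort]
  rfl

theorem Reachable.dist_lt_card_eigenvalues [RCLike 𝕜] {S T : W} (hST : G.Reachable S T)
    (hA : (G.adjMatrix 𝕜).IsHermitian) : G.dist S T < (Finset.univ.image hA.eigenvalues).card := by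
  by_contra! hle
  obtain ⟨c, hc⟩ := hA.exists_pow_eq_sum_pow_lt_card_eigenvalues (G.dist S T)
  obtain ⟨p, -, hp⟩ := hST.exists_path_of_dist
  have hd : (G.adjMatrix 𝕜 ^ G.dist S T) S T ≠ 0 := (adjMatrix_pow_apply_ne_zero_iff _ _ _).2 ⟨p, hp⟩
  rw [hc, Matrix.sum_apply] at hd
  obtain ⟨k, hk, hck⟩ := Finset.exists_ne_zero_of_sum_ne_zero hd
  rw [Matrix.smul_apply] at hck
  obtain ⟨q, rfl⟩ := (adjMatrix_pow_apply_ne_zero_iff k S T).1 (right_ne_zero_of_smul hck)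
  have := dist_le q
  have := Finset.mem_range.1 hk
  omega

end SimpleGraph

lemma Adj.ne {H : Hypergraph' V} {S T : Finset V} (h : Adj H S T) : S ≠ T := by
  rintro rfl
  exact h.1.ne_empty (Finset.disjoint_self_iff_empty _ |>.mp h.2.2.1)

namespace Hypergraph'

variable {H : Hypergraph' V}

lemma nonempty_of_mem_IH {S : Finset V} (h : S ∈ IH H) : S.Nonempty := by
  rw [IH, Finset.mem_filter] at h
  rcases h.2 with ⟨hne, -⟩ | ⟨v, -, rfl⟩
  · exact hne
  · exact Finset.singleton_nonempty v

def exactGraph (H : Hypergraph' V) : SimpleGraph (IH H) where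
  Adj S T := Adj H S T
  symm := ⟨fun _ _ ⟨hS, hT, hST, he⟩ => ⟨hT, hS, hST.symm, Finset.union_comm (α := V) _ _ ▸ he⟩⟩
  loopless := ⟨fun _ h => Adj.ne h rfl⟩

lemma exactGraph_adj_iff {S T : IH H} :
    (exactGraph H).Adj S T ↔ Disjoint (S : Finset V) T ∧ (S : Finset V) ∪ T ∈ H.edges :=
  ⟨fun h => h.2.2, fun h => ⟨nonempty_of_mem_IH S.2, nonempty_of_mem_IH T.2, h⟩⟩

open Classical in
theorem U_eq_adjMatrix (hs : Simple H) : U H = (exactGraph H).adjMatrix ℝ := by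
  ext S T
  rw [U, SimpleGraph.adjMatrix_apply]
  by_cases hST : (S : Finset V) = T
  · have hT : (T : Finset V).card = 1 → (T : Finset V) ∉ H.edges := fun hcard he => by
      have := hs.2 _ he
      omega
    have hadj : ¬(exactGraph H).Adj S T := fun h => Adj.ne h hST
    simpa [hST, hadj] using hT
  · by_cases hdisj : Disjoint (S : Finset V) T <;>
      simp [hST, hdisj, exactGraph_adj_iff, Multiset.count_eq_of_nodup hs.1]

theorem exactPathBetween_of_isPath {u v : V} {S T : IH H} {p : (exactGraph H).Walk S T}
    (hp : p.IsPath) (hu : u ∈ (S : Finset V)) (hv : v ∈ (T : Finset V)) :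
    ExactPathBetween H u v p.length := by
  refine ⟨p.support.map Subtype.val, by simp, hp.support_nodup.map Subtype.val_injective,
    fun _ h => by obtain ⟨X, -, rfl⟩ := List.mem_map.mp h; exact X.2,
    (List.isChain_map Subtype.val).mpr p.isChain_adj_support, ⟨S, ?_, hu⟩, ⟨T, ?_, hv⟩⟩
  · rw [List.head?_map, List.head?_eq_some_head p.support_ne_nil, p.head_support]; rfl
  · rw [List.getLast?_map, List.getLast?_eq_some_getLast p.support_ne_nil, p.getLast_support]; rfl

end Hypergraph'

open Hypergraph' in
theorem ExactPathBetween.exists_reachable {H : Hypergraph' V} {u v : V} {n : ℕ}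
    (h : ExactPathBetween H u v n) :
    ∃ S T : IH H, u ∈ (S : Finset V) ∧ v ∈ (T : Finset V) ∧ (exactGraph H).Reachable S T := by
  obtain ⟨l, hlen, -, hmem, hchain, ⟨S, hS, huS⟩, ⟨T, hT, hvT⟩⟩ := h
  lift l to List (IH H) using hmem
  have hne : l ≠ [] := by rintro rfl; simp at hlen
  rw [List.head?_map, List.head?_eq_some_head hne, Option.map_some, Option.some_inj] at hS
  rw [List.getLast?_map, List.getLast?_eq_some_getLast hne, Option.map_some, Option.some_inj] at hT
  subst hS hT
  exact ⟨_, _, huS, hvT, ⟨.ofSupport l hne ((List.isChain_map Subtype.val).mp hchain)⟩⟩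

theorem exact_diameter_le_card_distinct_eigenvalues_sub_one (H : Hypergraph' V)
    (hs : Simple H) (hU : (U H).IsHermitian)
    (hconn : ∀ u ∈ H.verts, ∀ v ∈ H.verts, u ≠ v → ∃ n : ℕ, ExactPathBetween H u v n) :
    ∀ u ∈ H.verts, ∀ v ∈ H.verts, u ≠ v →
      ∃ n ≤ (Finset.univ.image hU.eigenvalues).card - 1, ExactPathBetween H u v n := by
  classical
  revert hU
  rw [Hypergraph'.U_eq_adjMatrix hs]
  intro hU u hu v hv huv
  obtain ⟨n, hn⟩ := hconn u hu v hv huv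
  obtain ⟨S, T, huS, hvT, hST⟩ := hn.exists_reachable
  obtain ⟨p, hp, hlen⟩ := hST.exists_path_of_dist
  refine ⟨p.length, ?_, Hypergraph'.exactPathBetween_of_isPath hp huS hvT⟩
  have := hST.dist_lt_card_eigenvalues hU
  omega
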